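/- arXiv:2103.00388 — 2 statements merged into one kernel-verified Lean document; each statement's English description precedes it below -/
import Mathlib

section
/- Let D be a skew-symmetric n×n real matrix, Φ an n×r real matrix, H : ℝⁿ → ℝ differentiable, and set D_r = Φᵀ D Φ. If a : ℝ → ℝ^r is differentiable and satisfies the structure-preserving reduced order model ȧ(t) = D_r ∇ₐH(Φ a(t)), where ∇ₐH(Φa) is the gradient of a ↦ H(Φa), then the reduced Hamiltonian H_r(t) := H(Φ a(t)) is constant in t. -/
/-!
Along a solution, `d/dt H(Φ a) = ⟪∇ₐH(Φ a), ȧ⟫ = ⟪g, D_r g⟫` with `g = ∇ₐH(Φ a)`, and this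
vanishes because the congruence `D_r = Φᵀ D Φ` of a skew-symmetric matrix is again
skew-symmetric, so its quadratic form is zero.
-/

open Matrix

open scoped Gradient RealInnerProductSpace

namespace Matrix

theorem transpose_mul_mul_eq_neg {m n R : Type*} [Fintype m] [CommRing R]
    {D : Matrix m m R} (hD : Dᵀ = -D) (Φ : Matrix m n R) : (Φᵀ * D * Φ)ᵀ = -(Φᵀ * D * Φ) := by
  rw [transpose_mul, transpose_mul, transpose_transpose, hD, Matrix.neg_mul, Matrix.mul_neg,
    Matrix.mul_assoc]

theorem dotProduct_mulVec_self_eq_zero {n R : Type*} [Fintype n] [CommRing R] [NoZeroDivisors R]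
    [CharZero R] {M : Matrix n n R} (hM : Mᵀ = -M) (v : n → R) : v ⬝ᵥ M *ᵥ v = 0 := by
  refine CharZero.eq_neg_self_iff.mp ?_
  calc v ⬝ᵥ M *ᵥ v = v ⬝ᵥ Mᵀ *ᵥ v := by
        rw [mulVec_transpose, dotProduct_mulVec, dotProduct_comm]
    _ = -(v ⬝ᵥ M *ᵥ v) := by rw [hM, neg_mulVec, dotProduct_neg]

end Matrix

theorem apply_eq_of_deriv_eq_skew_gradient {E : Type*} [NormedAddCommGroup E]
    [InnerProductSpace ℝ E] [CompleteSpace E] {G : E → ℝ} (hG : Differentiable ℝ G)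
    {J : E → E} (hJ : ∀ v, ⟪v, J v⟫ = 0) {a : ℝ → E} (ha : Differentiable ℝ a)
    (hode : ∀ t, deriv a t = J (∇ G (a t))) (s t : ℝ) : G (a s) = G (a t) := by
  have hderiv (t : ℝ) : HasDerivAt (G ∘ a) ⟪∇ G (a t), deriv a t⟫ t := by
    simpa using (hG (a t)).hasGradientAt.hasFDerivAt.comp_hasDerivAt t (ha t).hasDerivAt
  refine is_const_of_deriv_eq_zero (hG.comp ha) (fun t => ?_) s t
  rw [(hderiv t).deriv, hode, hJ]

/-- For the structure-preserving reduced order model `ȧ(t) = D_r ∇ₐH(Φ a(t))` with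
`D_r = Φᵀ D Φ` and `D` skew-symmetric, the reduced Hamiltonian `H(Φ a(t))` is constant. -/
theorem sp_pod_hamiltonian_conserved
    {n r : ℕ} (D : Matrix (Fin n) (Fin n) ℝ) (hD : Dᵀ = -D)
    (Φ : Matrix (Fin n) (Fin r) ℝ)
    (H : EuclideanSpace ℝ (Fin n) → ℝ) (hH : Differentiable ℝ H)
    (a : ℝ → EuclideanSpace ℝ (Fin r)) (ha : Differentiable ℝ a)
    (hode : ∀ t : ℝ, deriv a t =
      (Φᵀ * D * Φ).mulVec
        (gradient (fun b : EuclideanSpace ℝ (Fin r) =>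
          H (WithLp.toLp 2 (Φ.mulVec b) : EuclideanSpace ℝ (Fin n))) (a t) : EuclideanSpace ℝ (Fin r))) :
    ∀ t : ℝ, H (WithLp.toLp 2 (Φ.mulVec (a t)) : EuclideanSpace ℝ (Fin n)) =
      H (WithLp.toLp 2 (Φ.mulVec (a 0)) : EuclideanSpace ℝ (Fin n)) := by
  have hG : Differentiable ℝ fun b => H (toEuclideanLin Φ b) :=
    hH.comp (LinearMap.toContinuousLinearMap (toEuclideanLin Φ)).differentiable
  have hJ (v : EuclideanSpace ℝ (Fin r)) : ⟪v, toEuclideanCLM (𝕜 := ℝ) (Φᵀ * D * Φ) v⟫ = 0 := by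
    rw [inner_toEuclideanCLM]
    exact dotProduct_mulVec_self_eq_zero (transpose_mul_mul_eq_neg hD Φ) _
  intro t
  exact apply_eq_of_deriv_eq_skew_gradient hG hJ ha
    (fun t => WithLp.ofLp_injective 2 (hode t)) t 0
end

section
/- Let D ∈ ℝ^{n×n} be skew-symmetric, Φ ∈ ℝ^{n×r}, Q ∈ ℝ^{n×n} symmetric, c ∈ ℝⁿ, 𝒫 ∈ ℝ^{n×n}, and let G : ℝⁿ → ℝⁿ be differentiable. Set D_r = Φᵀ D Φ, Q_r = Φᵀ Q Φ, and H_r(a) = ½ aᵀ Q_r a + cᵀ 𝒫 G(Φ a). If a : ℝ → ℝ^r is differentiable and satisfies the structure-preserving DEIM reduced model ȧ(t) = D_r ∇ₐH_r(a(t)) = D_r [Q_r a(t) + Φᵀ J_G(Φ a(t))ᵀ 𝒫ᵀ c], then H_r(a(t)) is constant in t. -/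
/-!
Along the reduced flow `ȧ = D_r ∇H_r(a)` the chain rule gives
`d/dt H_r(a) = ⟪∇H_r(a), D_r ∇H_r(a)⟫`, which vanishes because `D_r = Φᵀ D Φ` inherits
the skew-symmetry of `D`. The DEIM projection only changes the nonlinear term of `H_r`, and its
gradient `Φᵀ J_G(Φ a)ᵀ 𝒫ᵀ c` is exactly the one used in the reduced model; the gradient
`Q_r a` of the quadratic term relies on the symmetry of `Q`.
-/

open Matrix
open scoped InnerProductSpace

theorem comp_eq_of_hasDerivAt_skew_gradient {E : Type*} [NormedAddCommGroup E]
    [InnerProductSpace ℝ E] [CompleteSpace E] {H : E → ℝ} {gradH : E → E}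
    (hH : ∀ x, HasGradientAt H (gradH x) x) {D : E → E} (hD : ∀ v, ⟪v, D v⟫_ℝ = 0)
    {a : ℝ → E} (ha : ∀ t, HasDerivAt a (D (gradH (a t))) t) (t : ℝ) :
    H (a t) = H (a 0) := by
  have hHa : ∀ s, HasDerivAt (fun s => H (a s)) 0 s := fun s => by
    have h := (hH (a s)).hasFDerivAt.comp_hasDerivAt s (ha s)
    rwa [InnerProductSpace.toDual_apply_apply, hD] at h
  exact is_const_of_deriv_eq_zero (fun s => (hHa s).differentiableAt) (fun s => (hHa s).deriv) t 0

theorem HasGradientAt.add {𝕜 F : Type*} [RCLike 𝕜] [NormedAddCommGroup F]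
    [InnerProductSpace 𝕜 F] [CompleteSpace F] {f g : F → 𝕜} {f' g' x : F}
    (hf : HasGradientAt f f' x) (hg : HasGradientAt g g' x) :
    HasGradientAt (fun y => f y + g y) (f' + g') x := by
  rw [hasGradientAt_iff_hasFDerivAt, map_add]
  exact hf.hasFDerivAt.add hg.hasFDerivAt

theorem Matrix.dotProduct_mulVec_self_eq_zero_of_transpose_eq_neg {m R : Type*} [Fintype m]
    [CommRing R] [IsAddTorsionFree R] {A : Matrix m m R} (hA : Aᵀ = -A) (v : m → R) :
    v ⬝ᵥ A *ᵥ v = 0 := by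
  rw [← self_eq_neg]
  calc v ⬝ᵥ A *ᵥ v = Aᵀ *ᵥ v ⬝ᵥ v := by rw [dotProduct_mulVec, mulVec_transpose]
    _ = -(v ⬝ᵥ A *ᵥ v) := by rw [hA, neg_mulVec, neg_dotProduct, dotProduct_comm]

theorem Matrix.hasGradientAt_half_dotProduct_mulVec {m : Type*} [Fintype m] [DecidableEq m]
    {M : Matrix m m ℝ} (hM : Mᵀ = M) (b : EuclideanSpace ℝ m) :
    HasGradientAt (fun x : EuclideanSpace ℝ m => (1 / 2 : ℝ) * (x.ofLp ⬝ᵥ M *ᵥ x.ofLp))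
      (WithLp.toLp 2 (M *ᵥ b.ofLp)) b := by
  rw [hasGradientAt_iff_hasFDerivAt]
  have h := ((hasFDerivAt_id b).inner ℝ (toEuclideanCLM (𝕜 := ℝ) M).hasFDerivAt).const_mul
    (1 / 2 : ℝ)
  have hfun : (fun x : EuclideanSpace ℝ m => (1 / 2 : ℝ) * (x.ofLp ⬝ᵥ M *ᵥ x.ofLp)) =
      fun x => 1 / 2 * ⟪id x, toEuclideanCLM (𝕜 := ℝ) M x⟫_ℝ := by
    funext x
    simp [EuclideanSpace.inner_eq_star_dotProduct, dotProduct_comm]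
  rw [hfun]
  refine h.congr_fderiv (ContinuousLinearMap.ext fun v => ?_)
  simp only [one_div, id_eq, _root_.smul_apply, ContinuousLinearMap.comp_apply,
    ContinuousLinearMap.prod_apply, ContinuousLinearMap.id_apply, fderivInnerCLM_apply,
    EuclideanSpace.inner_eq_star_dotProduct, ofLp_toEuclideanCLM, star_trivial, smul_eq_mul,
    InnerProductSpace.toDual_apply_apply]
  have hsym : M *ᵥ v.ofLp ⬝ᵥ b.ofLp = v.ofLp ⬝ᵥ M *ᵥ b.ofLp := by
    rw [dotProduct_comm, ← dotProduct_transpose_mulVec, hM]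
  rw [hsym, dotProduct_comm (M *ᵥ b.ofLp)]
  ring

theorem HasFDerivAt.hasGradientAt_dotProduct {k l : Type*} [Fintype k] [DecidableEq k]
    [Fintype l] {F : EuclideanSpace ℝ k → EuclideanSpace ℝ l} {J : Matrix l k ℝ}
    {x : EuclideanSpace ℝ k} (hF : HasFDerivAt F (toEuclideanLin J).toContinuousLinearMap x)
    (w : l → ℝ) :
    HasGradientAt (fun y => w ⬝ᵥ (F y).ofLp) (WithLp.toLp 2 (Jᵀ *ᵥ w)) x := by
  rw [hasGradientAt_iff_hasFDerivAt]
  have h := (hasFDerivAt_const (WithLp.toLp 2 w : EuclideanSpace ℝ l) x).inner ℝ hF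
  have hfun : (fun y => w ⬝ᵥ (F y).ofLp) = fun y => ⟪WithLp.toLp 2 w, F y⟫_ℝ := by
    funext y
    simp [EuclideanSpace.inner_eq_star_dotProduct, dotProduct_comm]
  rw [hfun]
  refine h.congr_fderiv (ContinuousLinearMap.ext fun v => ?_)
  simp only [ContinuousLinearMap.comp_apply, ContinuousLinearMap.prod_apply,
    _root_.zero_apply, LinearMap.coe_toContinuousLinearMap', fderivInnerCLM_apply,
    EuclideanSpace.inner_eq_star_dotProduct, ofLp_toLpLin, toLin'_apply, star_trivial,
    inner_zero_left, add_zero, InnerProductSpace.toDual_apply_apply]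
  rw [dotProduct_transpose_mulVec, dotProduct_comm]

theorem HasGradientAt.comp_mulVec {m k : Type*} [Fintype m] [DecidableEq m] [Fintype k]
    {f : EuclideanSpace ℝ k → ℝ} {g : EuclideanSpace ℝ k} (Φ : Matrix k m ℝ)
    {b : EuclideanSpace ℝ m} (hf : HasGradientAt f g (WithLp.toLp 2 (Φ *ᵥ b.ofLp))) :
    HasGradientAt (fun x : EuclideanSpace ℝ m => f (WithLp.toLp 2 (Φ *ᵥ x.ofLp)))
      (WithLp.toLp 2 (Φᵀ *ᵥ g.ofLp)) b := by
  rw [hasGradientAt_iff_hasFDerivAt] at hf ⊢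
  refine (hf.comp b (toEuclideanLin Φ).toContinuousLinearMap.hasFDerivAt).congr_fderiv
    (ContinuousLinearMap.ext fun v => ?_)
  simp only [ContinuousLinearMap.comp_apply, LinearMap.coe_toContinuousLinearMap',
    InnerProductSpace.toDual_apply_apply, EuclideanSpace.inner_eq_star_dotProduct, ofLp_toLpLin,
    toLin'_apply, star_trivial]
  rw [dotProduct_transpose_mulVec, dotProduct_comm]

/-- Structure-preserving DEIM model: with `D` skew-symmetric, `D_r = Φᵀ D Φ`,
`Q_r = Φᵀ Q Φ`, and the DEIM reduced Hamiltonian `H_r(a) = ½ aᵀ Q_r a + cᵀ 𝒫 G(Φ a)`,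
any differentiable solution of
`ȧ(t) = D_r ∇ₐH_r(a(t)) = D_r [Q_r a(t) + Φᵀ J_G(Φ a(t))ᵀ 𝒫ᵀ c]`
keeps `H_r(a(t))` constant in time. -/
theorem sp_deim_hamiltonian_conserved
    {n r : ℕ} (D : Matrix (Fin n) (Fin n) ℝ) (hD : Dᵀ = -D)
    (Φ : Matrix (Fin n) (Fin r) ℝ)
    (Q : Matrix (Fin n) (Fin n) ℝ) (hQ : Qᵀ = Q)
    (c : Fin n → ℝ) (Pdeim : Matrix (Fin n) (Fin n) ℝ)
    (G : EuclideanSpace ℝ (Fin n) → EuclideanSpace ℝ (Fin n))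
    (J : EuclideanSpace ℝ (Fin n) → Matrix (Fin n) (Fin n) ℝ)
    (hJ : ∀ x : EuclideanSpace ℝ (Fin n),
      HasFDerivAt G (LinearMap.toContinuousLinearMap (Matrix.toEuclideanLin (J x))) x)
    (Hr : EuclideanSpace ℝ (Fin r) → ℝ)
    (hHr : Hr = fun b : EuclideanSpace ℝ (Fin r) =>
      (1 / 2 : ℝ) * (b ⬝ᵥ (Φᵀ * Q * Φ).mulVec b) +
        c ⬝ᵥ Pdeim.mulVec (G (WithLp.toLp 2 (Φ.mulVec b) : EuclideanSpace ℝ (Fin n))))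
    (a : ℝ → EuclideanSpace ℝ (Fin r)) (ha : Differentiable ℝ a)
    (hode : ∀ t : ℝ, deriv a t =
      (Φᵀ * D * Φ).mulVec
        ((Φᵀ * Q * Φ).mulVec (a t) +
          Φᵀ.mulVec ((J (WithLp.toLp 2 (Φ.mulVec (a t)) : EuclideanSpace ℝ (Fin n)))ᵀ.mulVec
            (Pdeimᵀ.mulVec c)))) :
    ∀ t : ℝ, Hr (a t) = Hr (a 0) := by
  have hQr : (Φᵀ * Q * Φ)ᵀ = Φᵀ * Q * Φ := by simp [transpose_mul, hQ, Matrix.mul_assoc]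
  have hDr : (Φᵀ * D * Φ)ᵀ = -(Φᵀ * D * Φ) := by simp [transpose_mul, hD, Matrix.mul_assoc]
  set gradHr : EuclideanSpace ℝ (Fin r) → EuclideanSpace ℝ (Fin r) := fun b =>
    WithLp.toLp 2 ((Φᵀ * Q * Φ) *ᵥ b.ofLp) +
      WithLp.toLp 2 (Φᵀ *ᵥ (J (WithLp.toLp 2 (Φ *ᵥ b.ofLp)))ᵀ *ᵥ Pdeimᵀ *ᵥ c)
  have hHr' : Hr = fun b : EuclideanSpace ℝ (Fin r) =>
      (1 / 2 : ℝ) * (b.ofLp ⬝ᵥ (Φᵀ * Q * Φ) *ᵥ b.ofLp) +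
        (Pdeimᵀ *ᵥ c) ⬝ᵥ (G (WithLp.toLp 2 (Φ *ᵥ b.ofLp))).ofLp := by
    rw [hHr]
    funext b
    rw [dotProduct_mulVec c Pdeim, ← mulVec_transpose Pdeim]
  have hgrad : ∀ b, HasGradientAt Hr (gradHr b) b := fun b => by
    rw [hHr']
    exact (hasGradientAt_half_dotProduct_mulVec hQr b).add
      (((hJ _).hasGradientAt_dotProduct (Pdeimᵀ *ᵥ c)).comp_mulVec Φ)
  have hskew : ∀ v, ⟪v, toEuclideanLin (Φᵀ * D * Φ) v⟫_ℝ = 0 := fun v => by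
    rw [EuclideanSpace.inner_eq_star_dotProduct, star_trivial, toLpLin_apply,
      dotProduct_comm]
    exact dotProduct_mulVec_self_eq_zero_of_transpose_eq_neg hDr v.ofLp
  have hflow : ∀ t, HasDerivAt a (toEuclideanLin (Φᵀ * D * Φ) (gradHr (a t))) t := fun t => by
    have hderiv : deriv a t = toEuclideanLin (Φᵀ * D * Φ) (gradHr (a t)) := by
      apply WithLp.ofLp_injective
      rw [hode t]
      simp only [gradHr, toLpLin_apply, WithLp.ofLp_add, WithLp.ofLp_toLp]
    exact hderiv ▸ (ha t).hasDerivAt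
  exact comp_eq_of_hasDerivAt_skew_gradient hgrad hskew hflow
end
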